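/- arXiv:1908.00791 — 3 statements merged into one kernel-verified Lean document; each statement's English description precedes it below -/
import Mathlib

section
/- If σ : X → X is a good shift of a semigroup X (i.e., X·X ⊆ σ(X) and σ(x) = σ(y) implies xz = yz and zx = zy for all z), then any bijection ψ : X → X satisfying σ ∘ ψ = σ and ψ(w) = w for all w ∈ X·X is an automorphism of the semigroup X. -/
/-- If `σ : X → X` is a good shift of a semigroup `X`, then any bijection `ψ : X → X`
satisfying `σ ∘ ψ = σ` and fixing all products is an automorphism of `X`. -/
theorem stmt0 {X : Type*} [Semigroup X] (σ : X → X)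
    (h1 : ∀ a b : X, a * b ∈ Set.range σ)
    (h2 : ∀ x y : X, σ x = σ y → ∀ z : X, x * z = y * z ∧ z * x = z * y)
    (ψ : X → X) (hbij : Function.Bijective ψ)
    (hσψ : σ ∘ ψ = σ) (hfix : ∀ a b : X, ψ (a * b) = a * b) :
    ∀ x y : X, ψ (x * y) = ψ x * ψ y := by
  intro x y
  have hx : σ (ψ x) = σ x := congrFun hσψ x
  have hy : σ (ψ y) = σ y := congrFun hσψ y
  rw [hfix, (h2 _ _ hx (ψ y)).1, (h2 _ _ hy x).2]
end

section
/- Let X be a semigroup with an auto-shift σ that is moreover a homomorphic retraction (σ ∘ σ = σ and σ is a homomorphism). Then every automorphism φ of the subsemigroup σ(X) such that for each x ∈ σ(X), φ(σ⁻¹(x) ∩ σ(X)) = σ⁻¹(φ(x)) ∩ σ(X) and |σ⁻¹(x) \ σ(X)| = |σ⁻¹(φ(x)) \ σ(X)|, extends to an automorphism of X. -/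
/-- If the auto-shift `σ` of a finite semigroup `X` is a homomorphic retraction, then
every automorphism `φ` of the subsemigroup `σ(X)` preserving the fibers inside `σ(X)`
and the cardinalities of the parts of fibers outside `σ(X)` extends to an automorphism
of `X`. -/
theorem stmt5 {X : Type*} [Semigroup X] [Finite X] (σ : X → X)
    (h1 : ∀ a b : X, a * b ∈ Set.range σ)
    (h2 : ∀ x y : X, σ x = σ y → ∀ z : X, x * z = y * z ∧ z * x = z * y)
    (h3 : ∀ φ : X ≃* X, σ ∘ φ = ⇑φ ∘ σ)
    (hhom : ∀ x y : X, σ (x * y) = σ x * σ y) (hidem : σ ∘ σ = σ)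
    (φ : X → X)
    (hrange : φ '' Set.range σ = Set.range σ)
    (hinj : Set.InjOn φ (Set.range σ))
    (hmul : ∀ x ∈ Set.range σ, ∀ y ∈ Set.range σ, φ (x * y) = φ x * φ y)
    (hfib1 : ∀ x ∈ Set.range σ,
      φ '' (σ ⁻¹' {x} ∩ Set.range σ) = σ ⁻¹' {φ x} ∩ Set.range σ)
    (hfib2 : ∀ x ∈ Set.range σ,
      (σ ⁻¹' {x} \ Set.range σ).ncard = (σ ⁻¹' {φ x} \ Set.range σ).ncard) :
    ∃ ψ : X ≃* X, ∀ x ∈ Set.range σ, ψ x = φ x := by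
  classical
  set R := Set.range σ with hRdef
  have hσσ : ∀ a, σ (σ a) = σ a := fun a => congrFun hidem a
  have hmemR : ∀ a ∈ R, σ a = a := by rintro a ⟨w, rfl⟩; exact hσσ w
  have hσR : ∀ a : X, σ a ∈ R := fun a => ⟨a, rfl⟩
  have hφR : ∀ a ∈ R, φ a ∈ R := by
    intro a ha; rw [← hrange]; exact ⟨a, ha, rfl⟩
  -- fiberwise bijections outside R
  have hfibequiv : ∀ x, x ∈ R →
      Nonempty ((σ ⁻¹' {x} \ R : Set X) ≃ (σ ⁻¹' {φ x} \ R : Set X)) := by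
    intro x hx
    refine Finite.card_eq.mp ?_
    rw [Nat.card_coe_set_eq, Nat.card_coe_set_eq]
    exact hfib2 x hx
  have hex : ∀ x : X, ∃ f : X → X,
      x ∈ R → Set.BijOn f (σ ⁻¹' {x} \ R) (σ ⁻¹' {φ x} \ R) := by
    intro x
    by_cases hx : x ∈ R
    · obtain ⟨ee⟩ := hfibequiv x hx
      refine ⟨fun a => if h : a ∈ σ ⁻¹' {x} \ R then ee ⟨a, h⟩ else a,
        fun _ => ⟨?_, ?_, ?_⟩⟩
      · intro a ha; simp only [dif_pos ha]; exact (ee ⟨a, ha⟩).2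
      · intro a ha b hb hfab
        simp only [dif_pos ha, dif_pos hb] at hfab
        exact congrArg Subtype.val (ee.injective (Subtype.ext hfab))
      · intro c hc
        refine ⟨(ee.symm ⟨c, hc⟩ : X), (ee.symm ⟨c, hc⟩).2, ?_⟩
        simp only [dif_pos (ee.symm ⟨c, hc⟩).2]
        exact congrArg Subtype.val (ee.apply_symm_apply ⟨c, hc⟩)
    · exact ⟨id, fun h => absurd h hx⟩
  choose f hf using hex
  let ψ₀ : X → X := fun a => if a ∈ R then φ a else f (σ a) a
  have hψ₀R : ∀ a ∈ R, ψ₀ a = φ a := by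
    intro a ha; simp only [ψ₀, if_pos ha]
  have hψ₀N : ∀ a ∉ R, ψ₀ a = f (σ a) a := by
    intro a ha; simp only [ψ₀, if_neg ha]
  have hfmem : ∀ a, a ∉ R → f (σ a) a ∈ σ ⁻¹' {φ (σ a)} \ R :=
    fun a ha => (hf (σ a) (hσR a)).1 ⟨rfl, ha⟩
  -- key: σ (ψ₀ a) = φ (σ a)
  have hkey : ∀ a, σ (ψ₀ a) = φ (σ a) := by
    intro a
    by_cases ha : a ∈ R
    · rw [hψ₀R a ha, hmemR _ (hφR a ha), hmemR a ha]
    · rw [hψ₀N a ha]; exact (hfmem a ha).1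
  have hmemψ : ∀ a, (ψ₀ a ∈ R ↔ a ∈ R) := by
    intro a
    by_cases ha : a ∈ R
    · rw [hψ₀R a ha]; exact ⟨fun _ => ha, fun _ => hφR a ha⟩
    · rw [hψ₀N a ha]
      exact ⟨fun h => absurd h (hfmem a ha).2, fun h => absurd h ha⟩
  -- injectivity
  have hinj' : Function.Injective ψ₀ := by
    intro a b hab
    by_cases ha : a ∈ R
    · have hb : b ∈ R := by
        by_contra hb
        exact ((hmemψ b).not.mpr hb) (hab ▸ (hmemψ a).mpr ha)
      rw [hψ₀R a ha, hψ₀R b hb] at hab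
      exact hinj ha hb hab
    · have hb : b ∉ R := by
        intro hb
        exact ((hmemψ a).not.mpr ha) (hab ▸ (hmemψ b).mpr hb)
      have hσab : σ a = σ b := by
        have h1' : φ (σ a) = φ (σ b) := by rw [← hkey a, ← hkey b, hab]
        exact hinj (hσR a) (hσR b) h1'
      rw [hψ₀N a ha, hψ₀N b hb, ← hσab] at hab
      exact (hf (σ a) (hσR a)).2.1 ⟨rfl, ha⟩ ⟨hσab.symm, hb⟩ hab
  have hbij : Function.Bijective ψ₀ := Finite.injective_iff_bijective.mp hinj'
  -- product collapses to σ-values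
  have hprod : ∀ a b : X, a * b = σ a * σ b := by
    intro a b
    have e1 : a * b = σ a * b := (h2 a (σ a) (hσσ a).symm b).1
    have e2 : σ a * b = σ a * σ b := (h2 b (σ b) (hσσ b).symm (σ a)).2
    rw [e1, e2]
  -- multiplicativity
  have hmulψ : ∀ a b : X, ψ₀ (a * b) = ψ₀ a * ψ₀ b := by
    intro a b
    have hab : a * b ∈ R := h1 a b
    rw [hψ₀R _ hab, hprod a b, hmul _ (hσR a) _ (hσR b),
        hprod (ψ₀ a) (ψ₀ b), hkey a, hkey b]
  refine ⟨{ toEquiv := Equiv.ofBijective ψ₀ hbij, map_mul' := hmulψ }, ?_⟩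
  intro x hx
  show ψ₀ x = φ x
  exact hψ₀R x hx
end

section
/- For finite sets X and Y, if |λ(X)| = |λ(Y)| then |X| = |Y|, where λ(X) denotes the set of maximal linked upfamilies (systems) on X. More specifically: any injection f : X → Y with f(X) ≠ Y induces an injection λf : λ(X) → λ(Y) whose image is a proper subset of λ(Y), hence |X| < |Y| implies |λ(X)| < |λ(Y)|. -/
/-- `L` is an upfamily: a family of nonempty subsets closed under supersets. -/
def IsUpfamily {α : Type*} (L : Set (Set α)) : Prop :=
  (∀ A ∈ L, A.Nonempty) ∧ ∀ A ∈ L, ∀ B : Set α, A ⊆ B → B ∈ L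

/-- `L` is a linked upfamily: an upfamily any two of whose members intersect. -/
def IsLinkedUp {α : Type*} (L : Set (Set α)) : Prop :=
  IsUpfamily L ∧ ∀ A ∈ L, ∀ B ∈ L, (A ∩ B).Nonempty

/-- `L` is a maximal linked upfamily. -/
def IsMaxLinked {α : Type*} (L : Set (Set α)) : Prop :=
  IsLinkedUp L ∧ ∀ M : Set (Set α), IsLinkedUp M → L ⊆ M → M = L

/-- The map induced on superextensions by `f : α → β`. -/
def lmap {α β : Type*} (f : α → β) (L : Set (Set α)) : Set (Set β) :=
  {B : Set β | ∃ A ∈ L, f '' A ⊆ B}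


lemma univ_mem_max {α : Type*} [Nonempty α] {L : Set (Set α)}
    (hL : IsMaxLinked L) : Set.univ ∈ L := by
  have h := hL.2 (L ∪ {Set.univ}) ?_ Set.subset_union_left
  · rw [← h]; right; rfl
  · refine ⟨⟨?_, ?_⟩, ?_⟩
    · rintro A (hA | rfl)
      · exact hL.1.1.1 A hA
      · exact Set.univ_nonempty
    · rintro A (hA | rfl) B hAB
      · exact Or.inl (hL.1.1.2 A hA B hAB)
      · exact Or.inr (Set.eq_univ_of_univ_subset hAB)
    · rintro A (hA | rfl) B (hB | rfl)
      · exact hL.1.2 A hA B hB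
      · simpa using hL.1.1.1 A hA
      · simpa using hL.1.1.1 B hB
      · simp

/-- If `A` meets every member of a maximal linked family, then `A ∈ L`. -/
lemma mem_of_meets {α : Type*} [Nonempty α] {L : Set (Set α)} {A : Set α}
    (hL : IsMaxLinked L) (hA : ∀ B ∈ L, (A ∩ B).Nonempty) : A ∈ L := by
  have hAne : A.Nonempty := by simpa using hA Set.univ (univ_mem_max hL)
  set M : Set (Set α) := L ∪ {C | A ⊆ C} with hM
  have h := hL.2 M ?_ Set.subset_union_left
  · rw [← h]; exact Or.inr (subset_refl A)
  · refine ⟨⟨?_, ?_⟩, ?_⟩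
    · rintro B (hB | hB)
      · exact hL.1.1.1 B hB
      · exact hAne.mono hB
    · rintro B (hB | hB) C hBC
      · exact Or.inl (hL.1.1.2 B hB C hBC)
      · exact Or.inr (hB.trans hBC)
    · rintro B (hB | hB) C (hC | hC)
      · exact hL.1.2 B hB C hC
      · exact ((hA B hB).mono (Set.inter_subset_inter_left B hC)).mono
          (by rw [Set.inter_comm]) |>.mono (subset_refl _)
      · exact (hA C hC).mono (Set.inter_subset_inter_left C hB)
      · exact hAne.mono (Set.subset_inter hB hC)

/-- A linked upfamily containing every set that meets all its members is maximal. -/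
lemma max_of_meets {α : Type*} {L : Set (Set α)} (hL : IsLinkedUp L)
    (h : ∀ A : Set α, (∀ B ∈ L, (A ∩ B).Nonempty) → A ∈ L) : IsMaxLinked L := by
  refine ⟨hL, fun M hM hLM => Set.Subset.antisymm (fun C hC => ?_) hLM⟩
  exact h C fun B hB => hM.2 C hC B (hLM hB)

lemma lmap_isMax {α β : Type*} [Nonempty α] {f : α → β} {L : Set (Set α)}
    (hL : IsMaxLinked L) : IsMaxLinked (lmap f L) := by
  have : Nonempty β := ⟨f (Classical.arbitrary α)⟩
  have hup : IsLinkedUp (lmap f L) := by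
    refine ⟨⟨?_, ?_⟩, ?_⟩
    · rintro B ⟨A, hA, hAB⟩
      exact ((hL.1.1.1 A hA).image f).mono hAB
    · rintro B ⟨A, hA, hAB⟩ C hBC
      exact ⟨A, hA, hAB.trans hBC⟩
    · rintro B ⟨A, hA, hAB⟩ C ⟨A', hA', hAC⟩
      obtain ⟨x, hx, hx'⟩ := hL.1.2 A hA A' hA'
      exact ⟨f x, hAB ⟨x, hx, rfl⟩, hAC ⟨x, hx', rfl⟩⟩
  refine max_of_meets hup fun C hC => ?_
  refine ⟨f ⁻¹' C, ?_, Set.image_preimage_subset f C⟩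
  refine mem_of_meets hL fun B hB => ?_
  obtain ⟨y, hyC, x, hxB, rfl⟩ := hC (f '' B) ⟨B, hB, subset_refl _⟩
  exact ⟨x, hyC, hxB⟩

lemma mem_iff_image_mem {α β : Type*} {f : α → β} (hf : Function.Injective f)
    {L : Set (Set α)} (hL : IsLinkedUp L) {A : Set α} :
    A ∈ L ↔ f '' A ∈ lmap f L := by
  constructor
  · exact fun h => ⟨A, h, subset_refl _⟩
  · rintro ⟨A', hA', h⟩
    exact hL.1.2 A' hA' A ((Set.image_subset_image_iff hf).mp h)

lemma lmap_inj {α β : Type*} {f : α → β} (hf : Function.Injective f)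
    {L L' : Set (Set α)} (hL : IsLinkedUp L) (hL' : IsLinkedUp L')
    (h : lmap f L = lmap f L') : L = L' := by
  ext A
  rw [mem_iff_image_mem hf hL, mem_iff_image_mem hf hL', h]

/-- The principal maximal linked family at a point. -/
lemma principal_max {β : Type*} (y : β) : IsMaxLinked {B : Set β | y ∈ B} := by
  refine max_of_meets ⟨⟨fun A hA => ⟨y, hA⟩, fun A hA B hAB => hAB hA⟩,
    fun A hA B hB => ⟨y, hA, hB⟩⟩ fun A hA => ?_
  simpa using hA {y} rfl

lemma card_lt_of_card_lt {X Y : Type*} [Finite X] [Finite Y] [Nonempty X] [Nonempty Y]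
    (h : Nat.card X < Nat.card Y) :
    Nat.card {L : Set (Set X) // IsMaxLinked L} <
      Nat.card {M : Set (Set Y) // IsMaxLinked M} := by
  have : Fintype X := Fintype.ofFinite X
  have : Fintype Y := Fintype.ofFinite Y
  rw [Nat.card_eq_fintype_card, Nat.card_eq_fintype_card] at h
  obtain ⟨f⟩ := Function.Embedding.nonempty_of_card_le h.le
  have hf : Function.Injective f := f.injective
  have hr : Set.range ⇑f ≠ Set.univ := by
    intro hu
    have : Function.Surjective f := Set.range_eq_univ.mp hu
    have := Fintype.card_le_of_surjective f this
    omega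
  obtain ⟨y, hy⟩ : ∃ y : Y, y ∉ Set.range ⇑f := by
    by_contra hc
    push_neg at hc
    exact hr (Set.eq_univ_of_forall hc)
  set g : {L : Set (Set X) // IsMaxLinked L} → {M : Set (Set Y) // IsMaxLinked M} :=
    fun L => ⟨lmap f L.1, lmap_isMax L.2⟩ with hg
  have hginj : Function.Injective g := by
    rintro ⟨L, hL⟩ ⟨L', hL'⟩ hLL
    exact Subtype.ext (lmap_inj hf hL.1 hL'.1 (congrArg Subtype.val hLL))
  have hmiss : (⟨{B : Set Y | y ∈ B}, principal_max y⟩ :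
      {M : Set (Set Y) // IsMaxLinked M}) ∉ Set.range g := by
    rintro ⟨⟨L, hL⟩, hLeq⟩
    have h1 : ({y} : Set Y) ∈ lmap (⇑f) L := by
      have := congrArg Subtype.val hLeq
      simp only [hg] at this
      rw [this]; exact rfl
    obtain ⟨A, hA, hAy⟩ := h1
    obtain ⟨x, hx⟩ := hL.1.1.1 A hA
    exact hy ⟨x, by simpa using hAy ⟨x, hx, rfl⟩⟩
  have : Fintype {L : Set (Set X) // IsMaxLinked L} := Fintype.ofFinite _
  have : Fintype {M : Set (Set Y) // IsMaxLinked M} := Fintype.ofFinite _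
  rw [Nat.card_eq_fintype_card, Nat.card_eq_fintype_card]
  exact Fintype.card_lt_of_injective_of_notMem g hginj hmiss

/-- For finite nonempty sets `X, Y`: any injection `f : X → Y` with proper range
induces an injection `λf : λ(X) → λ(Y)` whose image is a proper subset of `λ(Y)`;
hence `|X| < |Y|` implies `|λ(X)| < |λ(Y)|`, and `|λ(X)| = |λ(Y)|` implies
`|X| = |Y|`. -/
theorem stmt12 {X Y : Type*} [Finite X] [Finite Y] [Nonempty X] [Nonempty Y] :
    (∀ f : X → Y, Function.Injective f → Set.range f ≠ Set.univ →
      (∀ L : Set (Set X), IsMaxLinked L → IsMaxLinked (lmap f L)) ∧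
      (∀ L L' : Set (Set X), IsMaxLinked L → IsMaxLinked L' →
        lmap f L = lmap f L' → L = L') ∧
      {M : Set (Set Y) | ∃ L : Set (Set X), IsMaxLinked L ∧ lmap f L = M} ≠
        {M : Set (Set Y) | IsMaxLinked M}) ∧
    (Nat.card X < Nat.card Y →
      Nat.card {L : Set (Set X) // IsMaxLinked L} <
        Nat.card {M : Set (Set Y) // IsMaxLinked M}) ∧
    (Nat.card {L : Set (Set X) // IsMaxLinked L} =
        Nat.card {M : Set (Set Y) // IsMaxLinked M} →
      Nat.card X = Nat.card Y) := by
  have main : ∀ (f : X → Y), Function.Injective f → Set.range f ≠ Set.univ →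
      (∀ L : Set (Set X), IsMaxLinked L → IsMaxLinked (lmap f L)) ∧
      (∀ L L' : Set (Set X), IsMaxLinked L → IsMaxLinked L' →
        lmap f L = lmap f L' → L = L') ∧
      {M : Set (Set Y) | ∃ L : Set (Set X), IsMaxLinked L ∧ lmap f L = M} ≠
        {M : Set (Set Y) | IsMaxLinked M} := by
    intro f hf hr
    obtain ⟨y, hy⟩ : ∃ y : Y, y ∉ Set.range f := by
      by_contra hc
      push_neg at hc
      exact hr (Set.eq_univ_of_forall hc)
    refine ⟨fun L hL => lmap_isMax hL, fun L L' hL hL' h => lmap_inj hf hL.1 hL'.1 h, ?_⟩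
    intro heq
    have hMmem : {B : Set Y | y ∈ B} ∈
        {M : Set (Set Y) | ∃ L : Set (Set X), IsMaxLinked L ∧ lmap f L = M} := by
      rw [heq]; exact principal_max y
    obtain ⟨L, hL, hLM⟩ := hMmem
    have h1 : ({y} : Set Y) ∈ lmap f L := by rw [hLM]; exact rfl
    obtain ⟨A, hA, hAy⟩ := h1
    obtain ⟨x, hx⟩ := hL.1.1.1 A hA
    exact hy ⟨x, by simpa using hAy ⟨x, hx, rfl⟩⟩
  refine ⟨main, card_lt_of_card_lt, fun h => ?_⟩
  rcases lt_trichotomy (Nat.card X) (Nat.card Y) with hlt | heq | hgt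
  · exact absurd h (card_lt_of_card_lt hlt).ne
  · exact heq
  · exact absurd h.symm (card_lt_of_card_lt hgt).ne
end
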